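/- Let I ⊆ ℝ be a nonempty open interval, τ, κ ∈ ℝ, ε₁ ∈ {−1, 1}, and f₁, f₂ : I → ℝ twice differentiable functions satisfying on I: f₁'' = −(f₁')² − f₁'·f₂' − τε₁/6 and f₂'' = (κε₁/2)·e^{−2f₂} − (3/2)·(f₂')² − (1/2)·f₁'·f₂' − τε₁/6. Then the function C₁ := e^{2f₂}·(f₁' − f₂')·(3f₁'f₂' + τε₁) − 3κε₁·f₁' is differentiable on I with C₁'(t) = (3/2)·f₁'(t)·(3κε₁·f₁'(t) − e^{2f₂(t)}·(f₁'(t) − f₂'(t))·(4f₂'(t)² + 5f₁'(t)f₂'(t) + τε₁)) for all t ∈ I. In particular, if C₁ ≡ 0 on I, then f₁'·(3κε₁f₁' − e^{2f₂}(f₁' − f₂')(4(f₂')² + 5f₁'f₂' + τε₁)) ≡ 0 on I. -/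

import Mathlib

/-!
Differentiate `C₁` by the product rule and eliminate `f₁''` and `f₂''` with the two ODEs; the
term `(κε₁/2)e^{-2f₂}` of `f₂''` cancels against the factor `e^{2f₂}`, and what is left factors
as stated. If `C₁` vanishes on the open set `I`, its derivative vanishes there too.
-/

open Filter Topology

noncomputable def C₁ (τ κ ε₁ : ℝ) (f₁' f₂ f₂' : ℝ → ℝ) (t : ℝ) : ℝ :=
  Real.exp (2 * f₂ t) * (f₁' t - f₂' t) * (3 * f₁' t * f₂' t + τ * ε₁)
    - 3 * κ * ε₁ * f₁' t

theorem hasDerivAt_C₁ {τ κ ε₁ a b c t : ℝ} {f₁' f₂ f₂' : ℝ → ℝ}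
    (h₁' : HasDerivAt f₁' a t) (h₂ : HasDerivAt f₂ b t) (h₂' : HasDerivAt f₂' c t) :
    HasDerivAt (C₁ τ κ ε₁ f₁' f₂ f₂')
      ((Real.exp (2 * f₂ t) * (2 * b) * (f₁' t - f₂' t) + Real.exp (2 * f₂ t) * (a - c))
          * (3 * f₁' t * f₂' t + τ * ε₁)
        + Real.exp (2 * f₂ t) * (f₁' t - f₂' t) * (3 * a * f₂' t + 3 * f₁' t * c)
        - 3 * κ * ε₁ * a) t :=
  (((h₂.const_mul 2).exp.mul (h₁'.sub h₂')).mul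
    (((h₁'.const_mul 3).mul h₂').add_const (τ * ε₁))).sub (h₁'.const_mul (3 * κ * ε₁))

theorem hasDerivAt_C₁_of_ode {τ κ ε₁ t : ℝ} {f₁' f₂ f₂' : ℝ → ℝ}
    (h₁' : HasDerivAt f₁' (-(f₁' t) ^ 2 - f₁' t * f₂' t - τ * ε₁ / 6) t)
    (h₂ : HasDerivAt f₂ (f₂' t) t)
    (h₂' : HasDerivAt f₂' ((κ * ε₁ / 2) * Real.exp (-(2 * f₂ t))
        - (3 / 2) * (f₂' t) ^ 2 - (1 / 2) * f₁' t * f₂' t - τ * ε₁ / 6) t) :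
    HasDerivAt (C₁ τ κ ε₁ f₁' f₂ f₂')
      ((3 / 2) * f₁' t * (3 * κ * ε₁ * f₁' t
        - Real.exp (2 * f₂ t) * (f₁' t - f₂' t)
          * (4 * (f₂' t) ^ 2 + 5 * f₁' t * f₂' t + τ * ε₁))) t := by
  convert hasDerivAt_C₁ h₁' h₂ h₂' using 1
  rw [Real.exp_neg]
  field_simp
  ring

theorem HasDerivAt.eq_zero_of_eventuallyEq_zero {f : ℝ → ℝ} {f' x : ℝ}
    (hf : HasDerivAt f f' x) (h : f =ᶠ[𝓝 x] 0) : f' = 0 := by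
  rw [← hf.deriv, h.deriv_eq, Pi.zero_def, deriv_const]

theorem deriv_C₁_general
    (I : Set ℝ) (hIopen : IsOpen I)
    (τ κ ε₁ : ℝ)
    (f₁' f₁'' f₂ f₂' f₂'' : ℝ → ℝ)
    (hdf₁' : ∀ t ∈ I, HasDerivAt f₁' (f₁'' t) t)
    (hdf₂ : ∀ t ∈ I, HasDerivAt f₂ (f₂' t) t)
    (hdf₂' : ∀ t ∈ I, HasDerivAt f₂' (f₂'' t) t)
    (heq1 : ∀ t ∈ I, f₁'' t = -(f₁' t) ^ 2 - f₁' t * f₂' t - τ * ε₁ / 6)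
    (heq2 : ∀ t ∈ I, f₂'' t = (κ * ε₁ / 2) * Real.exp (-(2 * f₂ t))
        - (3 / 2) * (f₂' t) ^ 2 - (1 / 2) * f₁' t * f₂' t - τ * ε₁ / 6) :
    (∀ t ∈ I, HasDerivAt (C₁ τ κ ε₁ f₁' f₂ f₂')
      ((3 / 2) * f₁' t * (3 * κ * ε₁ * f₁' t
        - Real.exp (2 * f₂ t) * (f₁' t - f₂' t)
          * (4 * (f₂' t) ^ 2 + 5 * f₁' t * f₂' t + τ * ε₁))) t) ∧
    ((∀ t ∈ I, C₁ τ κ ε₁ f₁' f₂ f₂' t = 0) →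
      ∀ t ∈ I, f₁' t * (3 * κ * ε₁ * f₁' t
        - Real.exp (2 * f₂ t) * (f₁' t - f₂' t)
          * (4 * (f₂' t) ^ 2 + 5 * f₁' t * f₂' t + τ * ε₁)) = 0) := by
  have hC₁ : ∀ t ∈ I, _ := fun t ht =>
    hasDerivAt_C₁_of_ode (heq1 t ht ▸ hdf₁' t ht) (hdf₂ t ht) (heq2 t ht ▸ hdf₂' t ht)
  refine ⟨hC₁, fun hzero t ht => ?_⟩
  have hderiv := (hC₁ t ht).eq_zero_of_eventuallyEq_zero
    (eventuallyEq_of_mem (hIopen.mem_nhds ht) hzero)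
  rw [mul_assoc] at hderiv
  exact (mul_eq_zero.mp hderiv).resolve_left (by norm_num)

/-- If f₁, f₂ are twice differentiable on a nonempty open interval I and satisfy
f₁'' = −f₁'² − f₁'f₂' − τε₁/6 and f₂'' = (κε₁/2)e^{−2f₂} − (3/2)f₂'² − (1/2)f₁'f₂' − τε₁/6,
then C₁ is differentiable on I with
C₁' = (3/2)f₁'(3κε₁f₁' − e^{2f₂}(f₁' − f₂')(4f₂'² + 5f₁'f₂' + τε₁)); in particular,
if C₁ ≡ 0 on I then f₁'(3κε₁f₁' − e^{2f₂}(f₁' − f₂')(4f₂'² + 5f₁'f₂' + τε₁)) ≡ 0 on I. -/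
theorem deriv_C₁
    (I : Set ℝ) (hIopen : IsOpen I) (hIne : I.Nonempty) (hIconn : I.OrdConnected)
    (τ κ ε₁ : ℝ) (hε : ε₁ = -1 ∨ ε₁ = 1)
    (f₁ f₁' f₁'' f₂ f₂' f₂'' : ℝ → ℝ)
    (hdf₁ : ∀ t ∈ I, HasDerivAt f₁ (f₁' t) t)
    (hdf₁' : ∀ t ∈ I, HasDerivAt f₁' (f₁'' t) t)
    (hdf₂ : ∀ t ∈ I, HasDerivAt f₂ (f₂' t) t)
    (hdf₂' : ∀ t ∈ I, HasDerivAt f₂' (f₂'' t) t)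
    (heq1 : ∀ t ∈ I, f₁'' t = -(f₁' t) ^ 2 - f₁' t * f₂' t - τ * ε₁ / 6)
    (heq2 : ∀ t ∈ I, f₂'' t = (κ * ε₁ / 2) * Real.exp (-(2 * f₂ t))
        - (3 / 2) * (f₂' t) ^ 2 - (1 / 2) * f₁' t * f₂' t - τ * ε₁ / 6) :
    (∀ t ∈ I, HasDerivAt (C₁ τ κ ε₁ f₁' f₂ f₂')
      ((3 / 2) * f₁' t * (3 * κ * ε₁ * f₁' t
        - Real.exp (2 * f₂ t) * (f₁' t - f₂' t)
          * (4 * (f₂' t) ^ 2 + 5 * f₁' t * f₂' t + τ * ε₁))) t) ∧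
    ((∀ t ∈ I, C₁ τ κ ε₁ f₁' f₂ f₂' t = 0) →
      ∀ t ∈ I, f₁' t * (3 * κ * ε₁ * f₁' t
        - Real.exp (2 * f₂ t) * (f₁' t - f₂' t)
          * (4 * (f₂' t) ^ 2 + 5 * f₁' t * f₂' t + τ * ε₁)) = 0) :=
  deriv_C₁_general I hIopen τ κ ε₁ f₁' f₁'' f₂ f₂' f₂'' hdf₁' hdf₂ hdf₂' heq1 heq2
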